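/- arXiv:math/9809075 — 4 statements merged into one kernel-verified Lean document; each statement's English description precedes it below -/
import Mathlib

section
/- For every integer k ≥ 3, a position u of the k-heap game is a P-position if and only if u ∈ ⋃_{n=0}^∞ P_n; that is, the P-positions are exactly the positions of the form (T_n, m_1, …, m_{k-1}) where (m_1, …, m_{k-1}) ranges over all unordered partitions of (k-1)·T_n + n into k-1 parts each of size ≥ T_n. -/
/-- `T n` is the `n`-th triangular number `n(n+1)/2`. -/
def T (n : ℕ) : ℕ := n * (n + 1) / 2

/-- `Pset k n` is the set `Pₙ` of positions `(T n, m₁, …, m_{k-1})` (nondecreasing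
`k`-tuples) whose first component is `T n` and whose remaining components sum to
`(k-1)·T n + n` (each of them is automatically `≥ T n` by monotonicity). -/
def Pset (k : ℕ) [NeZero k] (n : ℕ) : Set (Fin k → ℕ) :=
  {u | Monotone u ∧ u 0 = T n ∧
    ∑ i ∈ Finset.univ.erase 0, u i = (k - 1) * T n + n}

/-- A raw move of the `k`-heap game (before re-sorting): either (i) remove a positive
number of tokens from at least one and at most `k-1` heaps, or (ii) remove the same
positive number `t` of tokens from all `k` heaps (`t` at most the smallest heap). -/
def MoveRaw (k : ℕ) (u w : Fin k → ℕ) : Prop :=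
  ((∀ i, w i ≤ u i) ∧ u ≠ w ∧
    (Finset.univ.filter fun i => w i < u i).card ≤ k - 1)
  ∨ (∃ t > 0, ∀ i, u i = w i + t)

/-- `v` is a follower of `u`: `v` is obtained from `u` by one move, with
the components re-sorted into nondecreasing order. -/
def Follower (k : ℕ) (u v : Fin k → ℕ) : Prop :=
  ∃ w : Fin k → ℕ, MoveRaw k u w ∧ Monotone v ∧ ∃ σ : Equiv.Perm (Fin k), v = w ∘ σ

/-!
Write a position as its smallest heap `a` and its excess `d = ∑ uᵢ - k·a`; then `Pₙ` consists of
the positions with `a = T n` and `d = n`. The union of the `Pₙ` is stable: a move keeping some heap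
`j` bounds `T n ≤ uⱼ ≤ T m + m`, so `n ≤ m`, and then the target has the larger total; a uniform
move by `t` gives `T m + t ≤ T n` while the totals force `n ≤ m`. It is also absorbing: if
`T d < a`, subtracting `a - T d` from every heap lands in `P_d`; if `T d > a`, pick `n` with
`T n ≤ a ≤ T n + n` and move to `Pₙ` keeping one heap of size at most `T n + n`: another heap
if one is that small, and otherwise the smallest heap, where `k ≥ 3` makes the remaining heaps
large enough. In a game without infinite plays a stable absorbing set is exactly the set of
P-positions.
-/

open Finset Function

theorem mem_iff_mem_of_stable_of_absorbing {α : Type*} {F : α → α → Prop}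
    (hF : WellFounded (flip F)) {D S P : Set α} (hD : ∀ u v, F u v → v ∈ D)
    (hS : ∀ u ∈ D, u ∈ S ↔ ∀ v, F u v → v ∉ S)
    (hstable : ∀ u ∈ P, ∀ v, F u v → v ∉ P)
    (habsorb : ∀ u ∈ D, u ∉ P → ∃ v, F u v ∧ v ∈ P) :
    ∀ u ∈ D, u ∈ S ↔ u ∈ P := by
  intro u
  induction u using hF.induction with
  | _ u ih =>
    intro hu
    have hfollowers : ∀ v, F u v → (v ∈ S ↔ v ∈ P) := fun v hv => ih v hv (hD u v hv)
    rw [hS u hu]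
    constructor
    · intro hnoS
      by_contra huP
      obtain ⟨v, hv, hvP⟩ := habsorb u hu huP
      exact hnoS v hv ((hfollowers v hv).2 hvP)
    · intro huP v hv hvS
      exact hstable u huP v hv ((hfollowers v hv).1 hvS)

theorem Finset.add_card_mul_le_sum_add {ι : Type*} [DecidableEq ι] {s : Finset ι} {f : ι → ℕ}
    {c : ℕ} (hc : ∀ x ∈ s, c ≤ f x) {i : ι} (hi : i ∈ s) : f i + #s * c ≤ ∑ x ∈ s, f x + c := by
  have hrest : #(s.erase i) • c ≤ ∑ x ∈ s.erase i, f x :=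
    card_nsmul_le_sum _ _ c fun x hx => hc x (mem_of_mem_erase hx)
  rw [card_erase_of_mem hi, smul_eq_mul, Nat.sub_one_mul] at hrest
  have hsplit : f i + ∑ x ∈ s.erase i, f x = ∑ x ∈ s, f x := add_sum_erase s f hi
  have hcard : c ≤ #s * c := Nat.le_mul_of_pos_left c (card_pos.2 ⟨i, hi⟩)
  omega

theorem Fintype.sum_update_add {ι M : Type*} [Fintype ι] [DecidableEq ι] [AddCommMonoid M]
    (f : ι → M) (i : ι) (b : M) : ∑ x, update f i b x + f i = b + ∑ x, f x := by
  rw [sum_update_of_mem (mem_univ i), sum_eq_add_sum_sdiff_singleton_of_mem (mem_univ i) f,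
    add_comm (f i), add_assoc]

theorem Fintype.exists_le_le_sum_eq {ι : Type*} [Fintype ι] [DecidableEq ι] {l h : ι → ℕ}
    (hlh : l ≤ h) {R : ℕ} (hl : ∑ i, l i ≤ R) (hh : R ≤ ∑ i, h i) :
    ∃ x, l ≤ x ∧ x ≤ h ∧ ∑ i, x i = R := by
  induction hd : R - ∑ i, l i generalizing l with
  | zero => exact ⟨l, le_rfl, hlh, by omega⟩
  | succ d ih =>
    obtain ⟨i, hi⟩ : ∃ i, l i < h i := by
      by_contra! hge
      have := sum_le_sum fun i (_ : i ∈ univ) => hge i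
      omega
    have hsum : ∑ j, update l i (l i + 1) j = ∑ j, l j + 1 := by
      have := sum_update_add l i (l i + 1)
      omega
    have hstep : update l i (l i + 1) ≤ h := by
      intro j
      rcases eq_or_ne j i with rfl | hj
      · simpa using hi
      · simpa [hj] using hlh j
    obtain ⟨x, hlx, hxh, hx⟩ := ih hstep (by omega) (by omega)
    refine ⟨x, le_trans (fun j => ?_) hlx, hxh, hx⟩
    rcases eq_or_ne j i with rfl | hj <;> simp [*]

theorem two_mul_T (n : ℕ) : 2 * T n = n * (n + 1) :=
  Nat.mul_div_cancel' (Nat.even_mul_succ_self n).two_dvd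

theorem T_succ (n : ℕ) : T (n + 1) = T n + (n + 1) := by
  have h := two_mul_T (n + 1)
  rw [show (n + 1) * (n + 1 + 1) = n * (n + 1) + 2 * (n + 1) by ring, ← two_mul_T n] at h
  omega

theorem T_strictMono : StrictMono T :=
  strictMono_nat_of_lt_succ fun n => by rw [T_succ]; omega

theorem le_of_T_le_T_add {m n : ℕ} (h : T n ≤ T m + m) : n ≤ m :=
  Nat.lt_succ_iff.mp (T_strictMono.lt_iff_lt.mp (by rw [T_succ]; omega))

theorem exists_T_le_le_T_add (a : ℕ) : ∃ n, T n ≤ a ∧ a ≤ T n + n := by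
  induction a with
  | zero => exact ⟨0, le_rfl, Nat.zero_le _⟩
  | succ a ih =>
    obtain ⟨n, hn, ha⟩ := ih
    rcases ha.lt_or_eq with ha | rfl
    · exact ⟨n, by omega, by omega⟩
    · exact ⟨n + 1, by rw [T_succ]; omega, by rw [T_succ]; omega⟩

theorem sub_one_mul_add_self {k : ℕ} (hk : 0 < k) (a : ℕ) : (k - 1) * a + a = k * a := by
  rw [← Nat.succ_mul, Nat.succ_eq_add_one, Nat.sub_add_cancel hk]

section game

variable {k : ℕ} {m n : ℕ} {u v w : Fin k → ℕ}

/-- Membership in `Pset k n` up to reordering of the heaps. -/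
def IsPTuple (k n : ℕ) (w : Fin k → ℕ) : Prop :=
  (∀ i, T n ≤ w i) ∧ (∃ i, w i = T n) ∧ ∑ i, w i = k * T n + n

theorem isPTuple_comp_perm_iff (σ : Equiv.Perm (Fin k)) :
    IsPTuple k n (w ∘ σ) ↔ IsPTuple k n w := by
  have comp_perm : ∀ (w : Fin k → ℕ) (σ : Equiv.Perm (Fin k)),
      IsPTuple k n w → IsPTuple k n (w ∘ σ) := fun w σ ⟨hle, ⟨i, hi⟩, hsum⟩ =>
    ⟨fun j => hle (σ j), ⟨σ.symm i, by simpa using hi⟩, (Equiv.sum_comp σ w).trans hsum⟩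
  refine ⟨fun h => ?_, comp_perm w σ⟩
  simpa [comp_def] using comp_perm _ σ.symm h

theorem IsPTuple.le_T_add (hw : IsPTuple k m w) (i : Fin k) : w i ≤ T m + m := by
  have := add_card_mul_le_sum_add (fun j _ => hw.1 j) (mem_univ i)
  rw [card_univ, Fintype.card_fin, hw.2.2] at this
  omega

theorem sum_eq_sum_add_mul {t : ℕ} (h : ∀ i, u i = w i + t) :
    ∑ i, u i = ∑ i, w i + k * t := by
  simp [h, sum_add_distrib]

theorem card_filter_lt_le_iff [NeZero k] (hwu : w ≤ u) :
    #{i | w i < u i} ≤ k - 1 ↔ ∃ j, w j = u j := by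
  have hk := NeZero.pos k
  have hlt : #{i | w i < u i} < k ↔ ({i | w i < u i} : Finset (Fin k)) ≠ univ := by
    rw [← card_lt_iff_ne_univ, Fintype.card_fin]
  rw [Nat.le_sub_one_iff_lt hk, hlt, Ne, filter_eq_self]
  simp only [mem_univ, true_implies, not_forall, not_lt]
  exact exists_congr fun j => ⟨fun h => le_antisymm (hwu j) h, ge_of_eq⟩

theorem MoveRaw.sum_lt [NeZero k] (h : MoveRaw k u w) : ∑ i, w i < ∑ i, u i := by
  rcases h with ⟨hwu, hne, -⟩ | ⟨t, ht, hu⟩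
  · exact Fintype.sum_strictMono (lt_of_le_of_ne hwu (Ne.symm hne))
  · rw [sum_eq_sum_add_mul hu]
    have := Nat.mul_pos (NeZero.pos k) ht
    omega

theorem Follower.sum_lt [NeZero k] (h : Follower k u v) : ∑ i, v i < ∑ i, u i := by
  obtain ⟨w, hmove, -, σ, rfl⟩ := h
  exact (Equiv.sum_comp σ w).trans_lt hmove.sum_lt

theorem mem_Pset_iff [NeZero k] (hu : Monotone u) : u ∈ Pset k n ↔ IsPTuple k n u := by
  have hsplit := add_sum_erase univ u (mem_univ 0)
  have hk := sub_one_mul_add_self (NeZero.pos k) (T n)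
  constructor
  · rintro ⟨-, h0, hsum⟩
    exact ⟨fun i => h0 ▸ hu (Fin.zero_le i), ⟨0, h0⟩, by omega⟩
  · rintro ⟨hle, ⟨i, hi⟩, hsum⟩
    have h0 : u 0 = T n := le_antisymm (hi ▸ hu (Fin.zero_le i)) (hle 0)
    exact ⟨hu, h0, by omega⟩

theorem IsPTuple.not_moveRaw [NeZero k] (hu : IsPTuple k n u) (hw : IsPTuple k m w) :
    ¬ MoveRaw k u w := by
  intro hmove
  have hlt := hmove.sum_lt
  rw [hu.2.2, hw.2.2] at hlt
  rcases hmove with ⟨hwu, -, hcard⟩ | ⟨t, ht, heq⟩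
  · obtain ⟨j, hj⟩ := (card_filter_lt_le_iff hwu).1 hcard
    have hnm : n ≤ m := le_of_T_le_T_add ((hu.1 j).trans (hj ▸ hw.le_T_add j))
    have := Nat.mul_le_mul_left k (T_strictMono.monotone hnm)
    omega
  · obtain ⟨i, hi⟩ := hu.2.1
    have hTt : T m + t ≤ T n := by have := hw.1 i; have := heq i; omega
    have hsum := sum_eq_sum_add_mul heq
    rw [hu.2.2, hw.2.2] at hsum
    have hnm : n ≤ m := by
      have := Nat.mul_le_mul_left k hTt
      rw [mul_add] at this
      omega
    have := T_strictMono.monotone hnm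
    omega

theorem Follower.exists_moveRaw_isPTuple [NeZero k] (h : Follower k u v) (hv : v ∈ Pset k m) :
    ∃ w, MoveRaw k u w ∧ IsPTuple k m w := by
  obtain ⟨w, hmove, hmono, σ, rfl⟩ := h
  exact ⟨w, hmove, (isPTuple_comp_perm_iff σ).1 ((mem_Pset_iff hmono).1 hv)⟩

theorem exists_follower_mem_Pset_of_moveRaw [NeZero k] (h : MoveRaw k u w)
    (hw : IsPTuple k n w) : ∃ v, Follower k u v ∧ v ∈ Pset k n :=
  ⟨w ∘ Tuple.sort w, ⟨w, h, Tuple.monotone_sort w, _, rfl⟩,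
    (mem_Pset_iff (Tuple.monotone_sort w)).2 ((isPTuple_comp_perm_iff _).2 hw)⟩

theorem not_follower_of_mem_Pset [NeZero k] (hu : u ∈ Pset k n) (huv : Follower k u v) :
    v ∉ Pset k m := fun hv => by
  obtain ⟨w, hmove, hw⟩ := huv.exists_moveRaw_isPTuple hv
  exact ((mem_Pset_iff hu.1).1 hu).not_moveRaw hw hmove

/-- Heap `i` is lowered to `T n`, heap `j` is kept, and the others are lowered to fill the
total `k * T n + n`. -/
theorem exists_moveRaw_isPTuple_of_keep [NeZero k] {i j : Fin k} (hij : i ≠ j)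
    (hu : ∀ l, T n ≤ u l) (hj : u j ≤ T n + n) (hlt : k * T n + n < ∑ l, u l)
    (hle : k * T n + n + u i ≤ ∑ l, u l + T n) : ∃ w, MoveRaw k u w ∧ IsPTuple k n w := by
  have hsum_lo := Fintype.sum_update_add (fun _ => T n) j (u j)
  have hsum_hi := Fintype.sum_update_add u i (T n)
  set lo := update (fun _ => T n) j (u j)
  set hi := update u i (T n)
  have hlo : ∀ l, T n ≤ lo l := fun l => by
    rcases eq_or_ne l j with rfl | hl <;> simp [lo, *]
  have hhi : hi ≤ u := fun l => by
    rcases eq_or_ne l i with rfl | hl <;> simp [hi, *]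
  have hlohi : lo ≤ hi := fun l => by
    rcases eq_or_ne l j with rfl | hlj
    · simp [lo, hi, hij.symm]
    · rcases eq_or_ne l i with rfl | hli <;> simp [lo, hi, *]
  simp only [sum_const, card_univ, Fintype.card_fin, smul_eq_mul] at hsum_lo
  obtain ⟨x, hlox, hxhi, hxsum⟩ :=
    Fintype.exists_le_le_sum_eq hlohi (R := k * T n + n) (by omega) (by omega)
  have hxi : x i = T n := le_antisymm (by simpa [hi] using hxhi i) (hlo i |>.trans (hlox i))
  have hxj : x j = u j :=
    le_antisymm (by simpa [hi, hij.symm] using hxhi j) (by simpa [lo] using hlox j)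
  have hxu : x ≤ u := hxhi.trans hhi
  refine ⟨x, Or.inl ⟨hxu, ?_, (card_filter_lt_le_iff hxu).2 ⟨j, hxj⟩⟩,
    fun l => (hlo l).trans (hlox l), ⟨i, hxi⟩, hxsum⟩
  rintro rfl
  omega

theorem exists_moveRaw_isPTuple_of_T_lt [NeZero k] {d : ℕ} (hmin : ∀ l, u 0 ≤ u l)
    (hd : ∑ l, u l = k * u 0 + d) (hlt : T d < u 0) : ∃ w, MoveRaw k u w ∧ IsPTuple k d w := by
  set t := u 0 - T d
  have hsub : ∀ l, u l = (u l - t) + t := fun l => by have := hmin l; omega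
  have hsum := sum_eq_sum_add_mul hsub
  have hkt : k * u 0 = k * T d + k * t := by rw [← mul_add]; congr 1; omega
  exact ⟨fun l => u l - t, Or.inr ⟨t, by omega, hsub⟩,
    fun l => show T d ≤ u l - t by have := hmin l; omega, ⟨0, show u 0 - t = T d by omega⟩,
    show ∑ l, (u l - t) = k * T d + d by omega⟩

theorem exists_moveRaw_isPTuple_of_lt_T [NeZero k] (hk : 3 ≤ k) {d : ℕ}
    (hmin : ∀ l, u 0 ≤ u l) (hd : ∑ l, u l = k * u 0 + d) (hgt : u 0 < T d) :
    ∃ n w, MoveRaw k u w ∧ IsPTuple k n w := by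
  obtain ⟨n, hn, hn'⟩ := exists_T_le_le_T_add (u 0)
  have hnd : n < d := T_strictMono.lt_iff_lt.mp (hn.trans_lt hgt)
  have hkn := Nat.mul_le_mul_left k hn
  have hu : ∀ l, T n ≤ u l := fun l => hn.trans (hmin l)
  have hlt : k * T n + n < ∑ l, u l := by omega
  refine ⟨n, ?_⟩
  by_cases hsmall : ∃ j ≠ 0, u j ≤ T n + n
  · obtain ⟨j, hj0, hj⟩ := hsmall
    exact exists_moveRaw_isPTuple_of_keep hj0.symm hu hj hlt (by nlinarith)
  · push Not at hsmall
    have hcard : #(univ.erase (0 : Fin k)) = k - 1 := by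
      rw [card_erase_of_mem (mem_univ 0), card_univ, Fintype.card_fin]
    obtain ⟨i, hi⟩ : (univ.erase (0 : Fin k)).Nonempty := card_pos.1 (by omega)
    have hrest := add_card_mul_le_sum_add (c := T n + n + 1)
      (fun l hl => hsmall l (ne_of_mem_erase hl)) hi
    rw [hcard] at hrest
    have hsplit := add_sum_erase univ u (mem_univ 0)
    have hexpand : (k - 1) * (T n + n + 1) = (k - 1) * T n + (k - 1) * n + (k - 1) := by ring
    have hkT := sub_one_mul_add_self (NeZero.pos k) (T n)
    have h2n : 2 * n ≤ (k - 1) * n := Nat.mul_le_mul_right n (by omega)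
    exact exists_moveRaw_isPTuple_of_keep (ne_of_mem_erase hi) hu hn' hlt (by omega)

theorem exists_follower_mem_Pset [NeZero k] (hk : 3 ≤ k) (hu : Monotone u)
    (hnot : ∀ n, u ∉ Pset k n) : ∃ v, Follower k u v ∧ ∃ m, v ∈ Pset k m := by
  have hmin : ∀ l, u 0 ≤ u l := fun l => hu (Fin.zero_le l)
  obtain ⟨d, hd⟩ : ∃ d, ∑ l, u l = k * u 0 + d := by
    have := card_nsmul_le_sum univ u (u 0) fun l _ => hmin l
    rw [card_univ, Fintype.card_fin, smul_eq_mul] at this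
    exact ⟨_, (Nat.add_sub_cancel' this).symm⟩
  suffices ∃ n w, MoveRaw k u w ∧ IsPTuple k n w by
    obtain ⟨n, w, hmove, hw⟩ := this
    obtain ⟨v, hv, hvP⟩ := exists_follower_mem_Pset_of_moveRaw hmove hw
    exact ⟨v, hv, n, hvP⟩
  rcases lt_trichotomy (T d) (u 0) with hlt | heq | hgt
  · exact ⟨d, exists_moveRaw_isPTuple_of_T_lt hmin hd hlt⟩
  · exact absurd ((mem_Pset_iff hu).2 ⟨fun l => heq ▸ hmin l, ⟨0, heq.symm⟩, heq ▸ hd⟩) (hnot d)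
  · exact exists_moveRaw_isPTuple_of_lt_T hk hmin hd hgt

end game

/-- For every `k ≥ 3`, a position of the `k`-heap game is a P-position
(i.e. belongs to the unique set `S` such that a position is in `S` iff all its
followers are outside `S`) if and only if it lies in `⋃ n, Pₙ`. -/
theorem heap_game_P_positions (k : ℕ) [NeZero k] (hk : 3 ≤ k)
    (S : Set (Fin k → ℕ))
    (hS : ∀ u : Fin k → ℕ, Monotone u →
      (u ∈ S ↔ ∀ v, Follower k u v → v ∉ S)) :
    ∀ u : Fin k → ℕ, Monotone u → (u ∈ S ↔ ∃ n, u ∈ Pset k n) := by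
  have hwf : WellFounded (flip (Follower k)) :=
    Subrelation.wf (fun h => h.sum_lt)
      (InvImage.wf (fun u : Fin k → ℕ => ∑ i, u i) wellFounded_lt)
  refine mem_iff_mem_of_stable_of_absorbing (D := {u | Monotone u})
    (P := {u | ∃ n, u ∈ Pset k n}) hwf (fun _ _ ⟨_, _, hv, _⟩ => hv) hS ?_ ?_
  · rintro u ⟨n, hu⟩ v huv ⟨m, hv⟩
    exact not_follower_of_mem_Pset hu huv hv
  · intro u hu hP
    exact exists_follower_mem_Pset hk hu fun n hn => hP ⟨n, hn⟩
end

section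
/- Let k ≥ 3 and n ∈ ℕ. If (T_n, m_1, …, m_{k-1}) ∈ P_n and t is an integer with 0 < t ≤ T_n, then the position (T_n − t, m_1 − t, …, m_{k-1} − t) lies in P_m for no m ∈ ℕ. -/
theorem Finset.sum_tsub_const_add_card_mul {ι : Type*} (s : Finset ι) (f : ι → ℕ) {t : ℕ}
    (h : ∀ i ∈ s, t ≤ f i) : ∑ i ∈ s, (f i - t) + s.card * t = ∑ i ∈ s, f i := by
  rw [← smul_eq_mul, ← Finset.sum_const, ← Finset.sum_add_distrib]
  exact Finset.sum_congr rfl fun i hi => Nat.sub_add_cancel (h i hi)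

namespace Pset

variable {k : ℕ} [NeZero k] {n : ℕ} {u : Fin k → ℕ}

theorem le_apply (hu : u ∈ Pset k n) (i : Fin k) : T n ≤ u i :=
  hu.2.1 ▸ hu.1 (Fin.zero_le i)

/-- The first heaps give `T n = T m + t`; in the two sum conditions the `(k - 1) t` terms
then cancel and leave `m = n`. -/
theorem eq_of_sub_const_mem (hu : u ∈ Pset k n) {t : ℕ} (ht : t ≤ T n) {m : ℕ}
    (hm : (fun i => u i - t) ∈ Pset k m) : m = n ∧ T n = T m + t := by
  have hsum := Finset.sum_tsub_const_add_card_mul (Finset.univ.erase (0 : Fin k)) u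
    fun i _ => ht.trans (le_apply hu i)
  obtain ⟨-, hu0, husum⟩ := hu
  obtain ⟨-, hm0, hmsum⟩ := hm
  have hT : T n = T m + t := by simp only at hm0; omega
  rw [hmsum, husum, Finset.card_erase_of_mem (Finset.mem_univ _), Finset.card_univ,
    Fintype.card_fin, hT] at hsum
  exact ⟨by linarith, hT⟩

end Pset

theorem diagonal_move_from_P_not_P_general (k : ℕ) [NeZero k] (n : ℕ)
    (u : Fin k → ℕ) (hu : u ∈ Pset k n) (t : ℕ) (ht0 : 0 < t) (ht : t ≤ T n) :
    ∀ m, (fun i => u i - t) ∉ Pset k m := by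
  intro m hm
  obtain ⟨rfl, hT⟩ := Pset.eq_of_sub_const_mem hu ht hm
  omega

/-- if `(T n, m₁, …, m_{k-1}) ∈ Pₙ` and `0 < t ≤ T n`, then subtracting
`t` from every component gives a position lying in `Pₘ` for no `m`. -/
theorem diagonal_move_from_P_not_P (k : ℕ) [NeZero k] (hk : 3 ≤ k) (n : ℕ)
    (u : Fin k → ℕ) (hu : u ∈ Pset k n) (t : ℕ) (ht0 : 0 < t) (ht : t ≤ T n) :
    ∀ m, (fun i => u i - t) ∉ Pset k m :=
  diagonal_move_from_P_not_P_general k n u hu t ht0 ht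
end

section
/- Let k ≥ 3 and n ∈ ℕ. Suppose (T_n, m_1, …, m_{k-1}) is a position with T_n ≤ m_1 ≤ … ≤ m_{k-1} and m_1 + … + m_{k-1} = (k-1)·T_n + j for some integer j with 0 ≤ j < n. Then subtracting T_n − T_j from every component yields a position in P_j; that is, (T_j, m_1 − (T_n − T_j), …, m_{k-1} − (T_n − T_j)) ∈ P_j. -/
theorem T_monotone : Monotone T :=
  fun _ _ h => Nat.div_le_div_right (Nat.mul_le_mul h (Nat.add_le_add_right h 1))

theorem sub_const_mem_Pset (k : ℕ) [NeZero k] (j d : ℕ) (u : Fin k → ℕ) (hu : Monotone u)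
    (h0 : u 0 = T j + d) (hsum : ∑ i ∈ Finset.univ.erase 0, u i = (k - 1) * (T j + d) + j) :
    (fun i => u i - d) ∈ Pset k j := by
  have hd : ∀ i, d ≤ u i := fun i => (h0 ▸ Nat.le_add_left d (T j)).trans (hu (Fin.zero_le i))
  have hcard : (Finset.univ.erase (0 : Fin k)).card = k - 1 := by simp
  refine ⟨fun a b hab => Nat.sub_le_sub_right (hu hab) d, by simp [h0], ?_⟩
  calc ∑ i ∈ Finset.univ.erase 0, (u i - d)
      = ∑ i ∈ Finset.univ.erase 0, u i - (k - 1) * d := by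
        rw [Finset.sum_tsub_distrib _ fun i _ => hd i, Finset.sum_const, hcard, smul_eq_mul]
    _ = (k - 1) * T j + j := by rw [hsum, mul_add]; omega

theorem caseI_diagonal_move_general (k : ℕ) [NeZero k] (n j : ℕ) (hj : j < n)
    (u : Fin k → ℕ) (hu : Monotone u) (h0 : u 0 = T n)
    (hsum : ∑ i ∈ Finset.univ.erase 0, u i = (k - 1) * T n + j) :
    (fun i => u i - (T n - T j)) ∈ Pset k j := by
  obtain ⟨d, hd⟩ := Nat.exists_eq_add_of_le (T_monotone hj.le)
  rw [hd, Nat.add_sub_cancel_left]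
  exact sub_const_mem_Pset k j d u hu (h0.trans hd) (hsum.trans (by rw [hd]))

/-- Case (i) of part (II): if `(T n, m₁, …, m_{k-1})` is a position
with all `mᵢ ≥ T n` and `m₁ + ⋯ + m_{k-1} = (k-1)·T n + j` for some `0 ≤ j < n`,
then subtracting `T n - T j` from every component yields a position in `P_j`. -/
theorem caseI_diagonal_move (k : ℕ) [NeZero k] (hk : 3 ≤ k) (n j : ℕ) (hj : j < n)
    (u : Fin k → ℕ) (hu : Monotone u) (h0 : u 0 = T n)
    (hsum : ∑ i ∈ Finset.univ.erase 0, u i = (k - 1) * T n + j) :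
    (fun i => u i - (T n - T j)) ∈ Pset k j :=
  caseI_diagonal_move_general k n j hj u hu h0 hsum
end

section
/- Let k ≥ 3 and n ∈ ℕ. The map sending (T_n, m_1, …, m_{k-1}) to (m_1 − (T_n − 1), …, m_{k-1} − (T_n − 1)) is a bijection from P_n onto the set of nondecreasing (k-1)-tuples (x_1, …, x_{k-1}) of positive integers with x_1 + … + x_{k-1} = n + k − 1 and x_{k-1} ≤ n + 1. Consequently, the number of positions in P_n equals the number p_{k-1}(n+k-1) of partitions of n + k − 1 into exactly k − 1 positive integer parts. -/
open Finset

theorem Fin.monotone_cons_iff {α : Type*} [Preorder α] {n : ℕ} {f : Fin n → α} {a : α} :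
    Monotone (Fin.cons a f : Fin (n + 1) → α) ↔ (∀ i, a ≤ f i) ∧ Monotone f := by
  rw [monotone_iff_forall_lt, monotone_iff_forall_lt]
  exact Fin.liftFun_cons (· ≤ ·)

theorem Fin.sum_univ_erase_zero {M : Type*} [AddCommMonoid M] {n : ℕ} (f : Fin (n + 1) → M) :
    ∑ i ∈ univ.erase 0, f i = ∑ i : Fin n, f i.succ := by
  rw [Fin.univ_succ, erase_cons, sum_map]
  rfl

theorem sum_tsub_const_of_le {ι : Type*} [Fintype ι] {x : ι → ℕ} {c : ℕ} (hc : ∀ i, c ≤ x i) :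
    ∑ i, (x i - c) = ∑ i, x i - Fintype.card ι * c := by
  rw [sum_tsub_distrib _ fun i _ => hc i, sum_const, card_univ, smul_eq_mul]

theorem le_add_one_of_sum_eq_add_card {ι : Type*} [Fintype ι] {x : ι → ℕ} {s : ℕ}
    (hx : ∀ i, 1 ≤ x i) (hsum : ∑ i, x i = s + Fintype.card ι) (i : ι) : x i ≤ s + 1 := by
  have := single_le_sum (f := fun j => x j - 1) (fun _ _ => Nat.zero_le _) (mem_univ i)
  rw [sum_tsub_const_of_le hx, hsum, mul_one] at this
  omega

theorem bijOn_succ_add_one_sub (c s m : ℕ) :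
    Set.BijOn (fun (u : Fin (m + 1) → ℕ) (i : Fin m) => u i.succ + 1 - c)
      {u : Fin (m + 1) → ℕ | Monotone u ∧ u 0 = c ∧ ∑ i : Fin m, u i.succ = m * c + s}
      {x | Monotone x ∧ (∀ i, 1 ≤ x i) ∧ ∑ i, x i = s + m} := by
  have lower_bound {u : Fin (m + 1) → ℕ} (hmono : Monotone u) (hu0 : u 0 = c) (i : Fin m) :
      c ≤ u i.succ := hu0 ▸ hmono (Fin.zero_le _)
  refine Set.InvOn.bijOn (f' := fun x => Fin.cons c fun i => x i - 1 + c) ⟨?_, ?_⟩ ?_ ?_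
  · rintro u ⟨hmono, hu0, -⟩
    ext i
    induction i using Fin.cases with
    | zero => exact hu0.symm
    | succ i => have := lower_bound hmono hu0 i; simp only [Fin.cons_succ]; omega
  · rintro x ⟨-, hpos, -⟩
    ext i
    have := hpos i
    simp only [Fin.cons_succ]
    omega
  · rintro u ⟨hmono, hu0, hsum⟩
    have hc := lower_bound hmono hu0
    refine ⟨fun i j hij => ?_, fun i => ?_, ?_⟩ <;> dsimp only
    · have := hmono (Fin.succ_le_succ_iff.mpr hij); omega
    · have := hc i; omega
    · rw [sum_tsub_const_of_le fun i => le_add_right (hc i), sum_add_distrib, hsum]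
      simp only [sum_const, card_univ, Fintype.card_fin, smul_eq_mul, mul_one]
      omega
  · rintro x ⟨hmono, hpos, hsum⟩
    refine ⟨Fin.monotone_cons_iff.mpr ⟨fun i => Nat.le_add_left _ _, fun i j hij => ?_⟩,
      rfl, ?_⟩
    · have := hmono hij; have := hpos i; dsimp only; omega
    · simp only [Fin.cons_succ]
      rw [sum_add_distrib, sum_tsub_const_of_le hpos]
      simp only [Fintype.card_fin, mul_one, sum_const, card_univ, smul_eq_mul]
      omega

section MonotoneTuple

variable {α : Type*} [LinearOrder α] {m : ℕ}

theorem Multiset.sortedLE_sort (s : Multiset α) : (s.sort (· ≤ ·)).SortedLE :=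
  List.sortedLE_iff_pairwise.mpr (s.pairwise_sort _)

def monotoneTupleEquivSym : {x : Fin m → α // Monotone x} ≃ Sym α m where
  toFun x := ⟨List.ofFn x.1, by simp⟩
  invFun s := ⟨fun i => (s.1.sort (· ≤ ·))[i.cast (by simp)],
    fun _ _ hij => (s.1.sortedLE_sort).monotone_get hij⟩
  left_inv x := by
    have hsort : (List.ofFn x.1 : Multiset α).sort (· ≤ ·) = List.ofFn x.1 :=
      List.mergeSort_eq_self _ (List.sortedLE_iff_pairwise.mp (List.sortedLE_ofFn_iff.mpr x.2))
    ext i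
    simp [hsort]
  right_inv s := by
    ext1
    have hlen : (s.1.sort (· ≤ ·)).length = m := by simp
    change ((List.ofFn fun i : Fin m => (s.1.sort (· ≤ ·))[i.cast hlen.symm] : List α) :
      Multiset α) = s.1
    conv_rhs => rw [← s.1.sort_eq (· ≤ ·)]
    congr 1
    exact List.ext_getElem (by simp) fun _ _ _ => by simp; rfl

@[simp]
theorem coe_monotoneTupleEquivSym (x : {x : Fin m → α // Monotone x}) :
    (monotoneTupleEquivSym x : Multiset α) = List.ofFn x.1 :=
  rfl

end MonotoneTuple

def Nat.Partition.subtypeCardEquivSym (N m : ℕ) :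
    {p : N.Partition // Multiset.card p.parts = m} ≃
      {s : Sym ℕ m // (∀ a ∈ (s : Multiset ℕ), 0 < a) ∧ (s : Multiset ℕ).sum = N} where
  toFun p := ⟨⟨p.1.parts, p.2⟩, fun _ ha => p.1.parts_pos ha, p.1.parts_sum⟩
  invFun s := ⟨⟨s.1.1, fun ha => s.2.1 _ ha, s.2.2⟩, s.1.2⟩
  left_inv _ := rfl
  right_inv _ := rfl

theorem card_monotone_pos_tuple_eq_card_partition (N m : ℕ) :
    Nat.card {x : Fin m → ℕ // Monotone x ∧ (∀ i, 1 ≤ x i) ∧ ∑ i, x i = N} =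
      Nat.card {p : N.Partition // Multiset.card p.parts = m} := by
  refine Nat.card_congr <| (Equiv.subtypeSubtypeEquivSubtypeInter _ _).symm.trans <|
    (monotoneTupleEquivSym.subtypeEquiv fun x => ?_).trans
      (Nat.Partition.subtypeCardEquivSym N m).symm
  simp [List.sum_ofFn, Nat.one_le_iff_ne_zero, Nat.pos_iff_ne_zero]

/-- the map `(T n, m₁, …, m_{k-1}) ↦ (m₁ - (T n - 1), …, m_{k-1} - (T n - 1))`
(here `mᵢ - (T n - 1) = mᵢ + 1 - T n`) is a bijection from `Pₙ` onto the set of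
nondecreasing `(k-1)`-tuples of positive integers summing to `n + k - 1` with largest
part `≤ n + 1`; consequently `|Pₙ|` equals the number `p_{k-1}(n+k-1)` of partitions of
`n + k - 1` into exactly `k - 1` positive parts. -/
theorem Pset_card_eq_partitions (k : ℕ) [NeZero k] (n : ℕ) :
    Set.BijOn
      (fun (u : Fin k → ℕ) (i : Fin (k - 1)) =>
        u ⟨i.val + 1, by have := i.isLt; omega⟩ + 1 - T n)
      (Pset k n)
      {x : Fin (k - 1) → ℕ | Monotone x ∧ (∀ i, 1 ≤ x i) ∧ (∀ i, x i ≤ n + 1) ∧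
        ∑ i, x i = n + k - 1} ∧
    Nat.card (Pset k n) =
      Nat.card {p : Nat.Partition (n + k - 1) // Multiset.card p.parts = k - 1} := by
  obtain ⟨m, rfl⟩ : ∃ m, k = m + 1 := ⟨k - 1, (Nat.succ_pred_eq_of_ne_zero (NeZero.ne k)).symm⟩
  have hP : Pset (m + 1) n =
      {u | Monotone u ∧ u 0 = T n ∧ ∑ i : Fin m, u i.succ = m * T n + n} := by
    simp only [Pset, Fin.sum_univ_erase_zero, add_tsub_cancel_right]
  have hX : {x : Fin m → ℕ | Monotone x ∧ (∀ i, 1 ≤ x i) ∧ (∀ i, x i ≤ n + 1) ∧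
      ∑ i, x i = n + (m + 1) - 1} = {x | Monotone x ∧ (∀ i, 1 ≤ x i) ∧ ∑ i, x i = n + m} := by
    ext x
    constructor
    · rintro ⟨hmono, hpos, -, hsum⟩
      exact ⟨hmono, hpos, by omega⟩
    · rintro ⟨hmono, hpos, hsum⟩
      refine ⟨hmono, hpos, le_add_one_of_sum_eq_add_card hpos (by simpa using hsum), by omega⟩
  have hbij := bijOn_succ_add_one_sub (T n) n m
  rw [← hP, ← hX] at hbij
  refine ⟨hbij, ?_⟩
  rw [Nat.card_congr (hbij.equiv _), hX]
  exact card_monotone_pos_tuple_eq_card_partition _ _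
end
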